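/- The sequence a_m := m^{2/3}·inf{ E(Y) : Y ⊆ Q, #Y = m } converges as m → ∞; that is, its limit inferior and limit superior coincide (and are finite). -/

import Mathlib

/-!
Let `f m` be the optimal `m`-point energy. Cutting `Q` into `k³` subcubes of side `1 / k` and
placing in each a copy of an `m`-point configuration shrunk by `1 / k` (distances scale by `1 / k`,
volumes by `k⁻³`) gives `k² f (k³ m) ≤ f m`; moreover `f` is nonincreasing, since adding points
only lowers the energy. For `n ≥ K³ m`, choosing `k ≥ K` with `k³ m ≤ n < (k + 1)³ m` yields
`n^{2/3} f n ≤ (1 + 1/K)² m^{2/3} f m`. Letting `n → ∞` and then `K → ∞`, the limsup of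
`n^{2/3} f n` is at most `m^{2/3} f m` for every `m`, hence at most the liminf.
-/

open MeasureTheory

noncomputable section

/-- Euclidean 3-space. -/
abbrev E3 := EuclideanSpace ℝ (Fin 3)

/-- The closed unit cube Q = [0,1]³. -/
def Qcube : Set E3 := {x | ∀ i, x i ∈ Set.Icc (0 : ℝ) 1}

/-- The quantization energy E(Y) = ∫_Q dist(x,Y)² dx. -/
def quantE (Y : Finset E3) : ℝ := ∫ x in Qcube, (Metric.infDist x (↑Y : Set E3)) ^ 2

/-- The Voronoi cell of a generator y ∈ Y, relative to Q. -/
def vorCell (Y : Finset E3) (y : E3) : Set E3 :=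
  {x ∈ Qcube | ∀ z ∈ Y, dist x y ≤ dist x z}

/-- Y is a minimizer of the quantization energy among n-point subsets of Q. -/
def IsMinimizer (n : ℕ) (Y : Finset E3) : Prop :=
  (↑Y : Set E3) ⊆ Qcube ∧ Y.card = n ∧
    ∀ Z : Finset E3, (↑Z : Set E3) ⊆ Qcube → Z.card = n → quantE Y ≤ quantE Z

/-- ω₃ = 4π/3, the volume of the unit ball in ℝ³. -/
def omega3 : ℝ := 4 * Real.pi / 3

/-- Γ₁ = (2/5)^{2/3} / 40. -/
def Gamma1 : ℝ := ((2 / 5 : ℝ) ^ ((2 : ℝ) / 3)) / 40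

/-- Γ₃ = ω₃^{-1/5} Γ₁^{1/5}. -/
def Gamma3 : ℝ := omega3 ^ (-(1 : ℝ) / 5) * Gamma1 ^ ((1 : ℝ) / 5)

/-- Γ₅ = (1/4)(√(1 + 2⁴·3³/(5²·10³)) − 1) Γ₃. -/
def Gamma5 : ℝ :=
  (1 / 4) * (Real.sqrt (1 + (2 ^ 4 * 3 ^ 3 : ℝ) / (5 ^ 2 * 10 ^ 3)) - 1) * Gamma3

/-- Γ₄, the diameter upper-bound constant. -/
def Gamma4 : ℝ :=
  (2 * (12 : ℝ) ^ ((1 : ℝ) / 4) * (16 : ℝ) ^ ((1 : ℝ) / 3) /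
      (Real.pi ^ ((1 : ℝ) / 4) * omega3 ^ ((1 : ℝ) / 12))) *
    (Real.sqrt (1 + (2 ^ 4 * 3 ^ 3 : ℝ) / (5 ^ 2 * 10 ^ 3)) - 1) ^ (-(1 : ℝ) / 2) *
    ((5 ^ 2 * 10 ^ 3 : ℝ) / (2 ^ 2 * 3 ^ 3)) ^ ((1 : ℝ) / 4)

open Metric Filter Set Topology
open scoped Pointwise

theorem Set.Infinite.exists_finset_superset_card_eq {α : Type*} {s : Set α} (hs : s.Infinite)
    {Y : Finset α} (hY : ↑Y ⊆ s) {n : ℕ} (hn : Y.card ≤ n) :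
    ∃ Z : Finset α, Y ⊆ Z ∧ ↑Z ⊆ s ∧ Z.card = n := by
  have := hs.to_subtype
  classical
  obtain ⟨t, hYt, htn⟩ := Infinite.exists_superset_card_eq (Y.subtype (· ∈ s)) n
    (by rwa [Finset.card_subtype, Finset.filter_true_of_mem hY])
  refine ⟨t.map (Function.Embedding.subtype _), fun y hy => ?_, by simp, by simpa⟩
  simpa using ⟨hY hy, hYt (by simpa using hy)⟩

theorem setIntegral_le_sum_of_subset_iUnion {α ι : Type*} [MeasurableSpace α] {μ : Measure α}
    [Fintype ι] {s : Set α} {t : ι → Set α} (hst : s ⊆ ⋃ i, t i) {f : α → ℝ}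
    (hf : 0 ≤ f) (hfi : ∀ i, IntegrableOn f (t i) μ) :
    ∫ x in s, f x ∂μ ≤ ∑ i, ∫ x in t i, f x ∂μ := by
  have hle : μ.restrict s ≤ ∑ i, μ.restrict (t i) := by
    rw [← Measure.sum_fintype]
    exact (Measure.restrict_mono hst le_rfl).trans Measure.restrict_iUnion_le
  rw [← integral_finsetSum_measure fun i _ => hfi i]
  exact integral_mono_measure hle (Eventually.of_forall hf)
    (integrable_finsetSum_measure.2 fun i _ => hfi i)

theorem infDist_smul_add_image {E : Type*} [NormedAddCommGroup E] [NormedSpace ℝ E] {c : ℝ}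
    (hc : c ≠ 0) (b x : E) (s : Set E) :
    infDist (c • x + b) ((fun u => c • u + b) '' s) = |c| * infDist x s := by
  rw [show (fun u => c • u + b) '' s = (· + b) '' (c • s) by
    rw [← image_smul, image_image]]
  rw [infDist_image (isometry_add_right b), infDist_smul₀ hc, Real.norm_eq_abs]

theorem setIntegral_image_smul_add {E F : Type*} [NormedAddCommGroup E] [NormedSpace ℝ E]
    [FiniteDimensional ℝ E] [MeasurableSpace E] [BorelSpace E] (μ : Measure E)
    [μ.IsAddHaarMeasure] [NormedAddCommGroup F] [NormedSpace ℝ F] {s : Set E}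
    (hs : MeasurableSet s) {c : ℝ} (hc : c ≠ 0) (b : E) (g : E → F) :
    ∫ x in (fun u => c • u + b) '' s, g x ∂μ =
      |c| ^ Module.finrank ℝ E • ∫ u in s, g (c • u + b) ∂μ := by
  have hderiv : ∀ u ∈ s, HasFDerivWithinAt (fun u => c • u + b)
      (c • ContinuousLinearMap.id ℝ E) s u := fun u _ =>
    (((hasFDerivAt_id u).const_smul c).add_const b).hasFDerivWithinAt
  have hinj : InjOn (fun u => c • u + b) s := fun _ _ _ _ h =>
    smul_right_injective E hc (add_right_cancel h)
  rw [integral_image_eq_integral_abs_det_fderiv_smul μ hs hderiv hinj, integral_smul]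
  congr 1
  simp [ContinuousLinearMap.det, LinearMap.det_smul, abs_pow]

theorem Nat.exists_pow_mul_le_lt_succ_pow_mul {d K m n : ℕ} (hd : d ≠ 0) (hm : 0 < m)
    (hK : 1 ≤ K) (hn : K ^ d * m ≤ n) :
    ∃ k, K ≤ k ∧ k ^ d * m ≤ n ∧ n < (k + 1) ^ d * m := by
  have hex : ∃ k, n < (k + 1) ^ d * m := ⟨n, calc
    n < n + 1 := n.lt_succ_self
    _ ≤ (n + 1) ^ d := Nat.le_self_pow hd _
    _ ≤ (n + 1) ^ d * m := Nat.le_mul_of_pos_right _ hm⟩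
  have hKk : K ≤ Nat.find hex := by
    by_contra! h
    have : (Nat.find hex + 1) ^ d * m ≤ K ^ d * m := by gcongr; omega
    exact (Nat.find_spec hex).not_ge (this.trans hn)
  refine ⟨Nat.find hex, hKk, ?_, Nat.find_spec hex⟩
  obtain ⟨j, hj⟩ : ∃ j, Nat.find hex = j + 1 := Nat.exists_eq_succ_of_ne_zero (by omega)
  simpa [hj] using Nat.find_min hex (hj ▸ j.lt_succ_self)

section ScaledLimit

variable {f : ℕ → ℝ} {d : ℕ} {s : ℝ}

theorem rpow_div_mul_le_of_pow_mul_le (hs : 0 ≤ s) (hd : d ≠ 0) (hf : 0 ≤ f)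
    (hanti : AntitoneOn f (Ici 1))
    (hscale : ∀ k m : ℕ, 1 ≤ k → 1 ≤ m → (k : ℝ) ^ s * f (k ^ d * m) ≤ f m)
    {K m n : ℕ} (hK : 1 ≤ K) (hm : 1 ≤ m) (hn : K ^ d * m ≤ n) :
    (n : ℝ) ^ (s / d) * f n ≤ (1 + 1 / (K : ℝ)) ^ s * ((m : ℝ) ^ (s / d) * f m) := by
  obtain ⟨k, hKk, hkn, hnk⟩ := Nat.exists_pow_mul_le_lt_succ_pow_mul hd hm hK hn
  have hk : (0 : ℝ) < k := by exact_mod_cast hK.trans hKk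
  have hfn : (k : ℝ) ^ s * f n ≤ f m := by
    have hkm : 1 ≤ k ^ d * m := Nat.mul_pos (pow_pos (hK.trans hKk) d) hm
    exact (mul_le_mul_of_nonneg_left (hanti hkm (mem_Ici.2 (hkm.trans hkn)) hkn)
      (by positivity)).trans (hscale k m (hK.trans hKk) hm)
  have hpow : (n : ℝ) ^ (s / d) ≤ ((k : ℝ) + 1) ^ s * (m : ℝ) ^ (s / d) := by
    have : (n : ℝ) ≤ ((k : ℝ) + 1) ^ d * m := by exact_mod_cast hnk.le
    calc (n : ℝ) ^ (s / d) ≤ (((k : ℝ) + 1) ^ d * m) ^ (s / d) := by gcongr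
      _ = ((k : ℝ) + 1) ^ s * (m : ℝ) ^ (s / d) := by
        rw [Real.mul_rpow (by positivity) (by positivity),
          ← Real.rpow_natCast_mul (by positivity), mul_div_cancel₀ _ (by exact_mod_cast hd)]
  have hKk' : (1 + 1 / (k : ℝ)) ^ s ≤ (1 + 1 / (K : ℝ)) ^ s := by gcongr
  calc (n : ℝ) ^ (s / d) * f n ≤ ((k : ℝ) + 1) ^ s * (m : ℝ) ^ (s / d) * f n := by
        gcongr
        exact hf n
    _ = (1 + 1 / (k : ℝ)) ^ s * ((m : ℝ) ^ (s / d) * ((k : ℝ) ^ s * f n)) := by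
        rw [show (k : ℝ) + 1 = (1 + 1 / k) * k by field_simp,
          Real.mul_rpow (by positivity) hk.le]
        ring
    _ ≤ (1 + 1 / (K : ℝ)) ^ s * ((m : ℝ) ^ (s / d) * f m) := by
        gcongr
        exact mul_nonneg (by positivity) (mul_nonneg (by positivity) (hf n))

theorem limsup_rpow_div_mul_le_of_pow_mul_le (hs : 0 ≤ s) (hd : d ≠ 0) (hf : 0 ≤ f)
    (hanti : AntitoneOn f (Ici 1))
    (hscale : ∀ k m : ℕ, 1 ≤ k → 1 ≤ m → (k : ℝ) ^ s * f (k ^ d * m) ≤ f m)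
    {m : ℕ} (hm : 1 ≤ m) :
    limsup (fun n : ℕ => (n : ℝ) ^ (s / d) * f n) atTop ≤ (m : ℝ) ^ (s / d) * f m := by
  have hbound : ∀ K : ℕ, 1 ≤ K → limsup (fun n : ℕ => (n : ℝ) ^ (s / d) * f n) atTop ≤
      (1 + 1 / (K : ℝ)) ^ s * ((m : ℝ) ^ (s / d) * f m) := fun K hK =>
    limsup_le_of_le (isCoboundedUnder_le_of_le atTop fun n => mul_nonneg (by positivity) (hf n))
      ((eventually_ge_atTop (K ^ d * m)).mono fun n hn =>
        rpow_div_mul_le_of_pow_mul_le hs hd hf hanti hscale hK hm hn)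
  have hlim : Tendsto (fun K : ℕ => (1 + 1 / (K : ℝ)) ^ s * ((m : ℝ) ^ (s / d) * f m)) atTop
      (𝓝 ((m : ℝ) ^ (s / d) * f m)) := by
    simpa using ((tendsto_one_div_atTop_nhds_zero_nat.const_add 1).rpow_const
      (Or.inr hs)).mul_const ((m : ℝ) ^ (s / d) * f m)
  exact ge_of_tendsto hlim ((eventually_ge_atTop 1).mono hbound)

theorem exists_tendsto_rpow_div_mul_of_pow_mul_le (hs : 0 ≤ s) (hd : d ≠ 0) (hf : 0 ≤ f)
    (hanti : AntitoneOn f (Ici 1))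
    (hscale : ∀ k m : ℕ, 1 ≤ k → 1 ≤ m → (k : ℝ) ^ s * f (k ^ d * m) ≤ f m) :
    ∃ L, Tendsto (fun n : ℕ => (n : ℝ) ^ (s / d) * f n) atTop (𝓝 L) := by
  set g := fun n : ℕ => (n : ℝ) ^ (s / d) * f n
  have hbelow : IsBoundedUnder (· ≥ ·) atTop g :=
    isBoundedUnder_of_eventually_ge (a := 0) (Eventually.of_forall fun n =>
      mul_nonneg (by positivity) (hf n))
  have habove : IsBoundedUnder (· ≤ ·) atTop g :=
    isBoundedUnder_of_eventually_le ((eventually_ge_atTop 1).mono fun n hn =>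
      rpow_div_mul_le_of_pow_mul_le hs hd hf hanti hscale le_rfl le_rfl (by simpa using hn))
  refine ⟨limsup g atTop, tendsto_of_le_liminf_of_limsup_le ?_ le_rfl habove hbelow⟩
  exact le_liminf_of_le habove.isCoboundedUnder_ge ((eventually_ge_atTop 1).mono fun m hm =>
    limsup_rpow_div_mul_le_of_pow_mul_le hs hd hf hanti hscale hm)

end ScaledLimit

theorem isCompact_Qcube : IsCompact Qcube := by
  have : Qcube = WithLp.toLp 2 '' Icc 0 1 := by
    ext x
    refine ⟨fun hx => ⟨x.ofLp, ⟨fun i => (hx i).1, fun i => (hx i).2⟩, rfl⟩, ?_⟩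
    rintro ⟨y, hy, rfl⟩ i
    exact ⟨hy.1 i, hy.2 i⟩
  rw [this]
  exact isCompact_Icc.image (PiLp.continuous_toLp 2 _)

theorem Qcube_infinite : Qcube.Infinite := by
  have := (Icc_infinite (zero_lt_one' ℝ)).to_subtype
  exact infinite_of_injective_forall_mem
    (f := fun t : Icc (0 : ℝ) 1 => (WithLp.toLp 2 fun _ => t.1 : E3))
    (fun s t h => Subtype.ext (congrArg (fun x : E3 => x 0) h)) fun t _ => t.2

theorem integrableOn_infDist_sq {α : Type*} [MetricSpace α] [MeasurableSpace α]
    [OpensMeasurableSpace α] {μ : Measure α} [IsFiniteMeasureOnCompacts μ] (t : Set α)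
    {s : Set α} (hs : IsCompact s) : IntegrableOn (fun x => infDist x t ^ 2) s μ :=
  ((continuous_infDist_pt t).pow 2).continuousOn.integrableOn_compact hs

theorem quantE_nonneg (Y : Finset E3) : 0 ≤ quantE Y :=
  setIntegral_nonneg isCompact_Qcube.measurableSet fun _ _ => sq_nonneg _

theorem quantE_le_of_subset {Y Z : Finset E3} (hY : Y.Nonempty) (hYZ : Y ⊆ Z) : quantE Z ≤ quantE Y :=
  setIntegral_mono_on (integrableOn_infDist_sq _ isCompact_Qcube)
    (integrableOn_infDist_sq _ isCompact_Qcube) isCompact_Qcube.measurableSet fun _ _ =>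
      pow_le_pow_left₀ infDist_nonneg
        (infDist_le_infDist_of_subset (Finset.coe_subset.2 hYZ) (Finset.coe_nonempty.2 hY)) 2

def minQuantE (m : ℕ) : ℝ :=
  sInf {e : ℝ | ∃ Z : Finset E3, (↑Z : Set E3) ⊆ Qcube ∧ Z.card = m ∧ e = quantE Z}

theorem minQuantE_nonneg : 0 ≤ minQuantE := fun _ =>
  Real.sInf_nonneg fun _ ⟨Z, _, _, he⟩ => he ▸ quantE_nonneg Z

theorem minQuantE_le_quantE {n : ℕ} {Y : Finset E3} (hY : Y.Nonempty) (hYQ : ↑Y ⊆ Qcube)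
    (hn : Y.card ≤ n) : minQuantE n ≤ quantE Y := by
  obtain ⟨Z, hYZ, hZQ, hZn⟩ := Qcube_infinite.exists_finset_superset_card_eq hYQ hn
  have hbdd : BddBelow
      {e : ℝ | ∃ W : Finset E3, ↑W ⊆ Qcube ∧ W.card = n ∧ e = quantE W} :=
    ⟨0, fun _ ⟨W, _, _, he⟩ => he ▸ quantE_nonneg W⟩
  exact (csInf_le hbdd ⟨Z, hZQ, hZn, rfl⟩).trans (quantE_le_of_subset hY hYZ)

theorem minQuantE_antitoneOn : AntitoneOn minQuantE (Ici 1) := by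
  intro m hm n _ hmn
  obtain ⟨Y, hYQ, hYm⟩ := Qcube_infinite.exists_subset_card_eq m
  refine le_csInf ⟨_, Y, hYQ, hYm, rfl⟩ fun _ ⟨Z, hZQ, hZm, he⟩ => he ▸ ?_
  exact minQuantE_le_quantE (Finset.card_pos.1 (by rw [hZm]; exact hm)) hZQ (hZm ▸ hmn)

theorem exists_lt_mul_sub_mem_Icc {k : ℕ} (hk : 1 ≤ k) {t : ℝ} (ht : t ∈ Icc (0 : ℝ) 1) :
    ∃ j < k, k * t - j ∈ Icc (0 : ℝ) 1 := by
  rcases ht.2.eq_or_lt with rfl | ht1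
  · exact ⟨k - 1, by omega, by simp [Nat.cast_sub hk]⟩
  have hkt : 0 ≤ k * t := mul_nonneg k.cast_nonneg ht.1
  refine ⟨⌊k * t⌋₊, Nat.floor_lt hkt |>.2 ?_, sub_nonneg.2 (Nat.floor_le hkt), ?_⟩
  · have : (0 : ℝ) < k := by exact_mod_cast hk
    nlinarith
  · linarith [Nat.lt_floor_add_one (k * t)]

def subcubeMap (k : ℕ) (v : Fin 3 → Fin k) (u : E3) : E3 :=
  (k : ℝ)⁻¹ • u + (k : ℝ)⁻¹ • WithLp.toLp 2 fun i => (v i : ℝ)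

theorem subcubeMap_apply (k : ℕ) (v : Fin 3 → Fin k) (u : E3) (i : Fin 3) :
    subcubeMap k v u i = (u i + v i) / k := by
  simp [subcubeMap, div_eq_inv_mul, mul_add]

theorem subcubeMap_mem_Qcube {k : ℕ} (v : Fin 3 → Fin k) {u : E3} (hu : u ∈ Qcube) :
    subcubeMap k v u ∈ Qcube := by
  intro i
  have hk : (0 : ℝ) < k := by exact_mod_cast (Fin.pos (v i))
  have hv : (v i : ℝ) + 1 ≤ k := by exact_mod_cast (v i).isLt
  rw [subcubeMap_apply, mem_Icc, div_le_one hk]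
  exact ⟨div_nonneg (add_nonneg (hu i).1 (v i).val.cast_nonneg) hk.le, by linarith [(hu i).2]⟩

theorem Qcube_subset_iUnion_image_subcubeMap {k : ℕ} (hk : 1 ≤ k) :
    Qcube ⊆ ⋃ v, subcubeMap k v '' Qcube := by
  intro x hx
  choose j hjk hj using fun i => exists_lt_mul_sub_mem_Icc hk (hx i)
  refine mem_iUnion.2 ⟨fun i => ⟨j i, hjk i⟩, WithLp.toLp 2 fun i => k * x i - j i, hj, ?_⟩
  ext i
  have : (k : ℝ) ≠ 0 := by positivity
  simp [subcubeMap_apply, this]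

theorem infDist_subcubeMap_image (k : ℕ) (v : Fin 3 → Fin k) (x : E3) (s : Set E3) :
    infDist (subcubeMap k v x) (subcubeMap k v '' s) = (k : ℝ)⁻¹ * infDist x s := by
  rcases Nat.eq_zero_or_pos k with rfl | hk
  · exact (Fin.elim0 (v 0))
  have hc : (0 : ℝ) < (k : ℝ)⁻¹ := inv_pos.2 (Nat.cast_pos.2 hk)
  exact (infDist_smul_add_image hc.ne' _ x s).trans (by rw [abs_of_pos hc])

theorem setIntegral_image_subcubeMap (k : ℕ) (v : Fin 3 → Fin k) (s : Set E3) :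
    ∫ x in subcubeMap k v '' Qcube, infDist x (subcubeMap k v '' s) ^ 2 =
      ((k : ℝ) ^ 5)⁻¹ * ∫ u in Qcube, infDist u s ^ 2 := by
  rcases Nat.eq_zero_or_pos k with rfl | hk
  · exact (Fin.elim0 (v 0))
  refine (setIntegral_image_smul_add volume isCompact_Qcube.measurableSet
    (inv_ne_zero (Nat.cast_ne_zero.2 hk.ne')) _ _).trans ?_
  simp_rw [← subcubeMap.eq_1, infDist_subcubeMap_image, mul_pow, integral_const_mul, smul_eq_mul,
    finrank_euclideanSpace_fin, abs_inv, Nat.abs_cast]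
  ring

theorem isCompact_image_subcubeMap (k : ℕ) (v : Fin 3 → Fin k) :
    IsCompact (subcubeMap k v '' Qcube) :=
  isCompact_Qcube.image ((continuous_const_smul _).add continuous_const)

open Classical in
theorem quantE_biUnion_image_subcubeMap_le {k : ℕ} (hk : 1 ≤ k) {Z : Finset E3}
    (hZ : Z.Nonempty) :
    quantE (Finset.univ.biUnion fun v => Z.image (subcubeMap k v)) ≤
      ((k : ℝ) ^ 2)⁻¹ * quantE Z := by
  set Y := Finset.univ.biUnion fun v => Z.image (subcubeMap k v)
  have hcell : ∀ v, ∫ x in subcubeMap k v '' Qcube, infDist x Y ^ 2 ≤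
      ((k : ℝ) ^ 5)⁻¹ * quantE Z := by
    intro v
    have hsub : subcubeMap k v '' Z ⊆ Y := by
      rintro _ ⟨z, hz, rfl⟩
      simpa [Y] using ⟨v, z, hz, rfl⟩
    rw [quantE, ← setIntegral_image_subcubeMap]
    exact setIntegral_mono_on (integrableOn_infDist_sq _ (isCompact_image_subcubeMap k v))
      (integrableOn_infDist_sq _ (isCompact_image_subcubeMap k v))
      (isCompact_image_subcubeMap k v).measurableSet fun x _ => pow_le_pow_left₀ infDist_nonneg
        (infDist_le_infDist_of_subset hsub ((Finset.coe_nonempty.2 hZ).image _)) 2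
  calc quantE Y ≤ ∑ v, ∫ x in subcubeMap k v '' Qcube, infDist x Y ^ 2 :=
        setIntegral_le_sum_of_subset_iUnion (Qcube_subset_iUnion_image_subcubeMap hk)
          (fun _ => sq_nonneg _) fun v => integrableOn_infDist_sq _ (isCompact_image_subcubeMap k v)
    _ ≤ ∑ _v : Fin 3 → Fin k, ((k : ℝ) ^ 5)⁻¹ * quantE Z :=
        Finset.sum_le_sum fun v _ => hcell v
    _ = ((k : ℝ) ^ 2)⁻¹ * quantE Z := by
        have : (k : ℝ) ≠ 0 := by positivity
        simp only [Finset.sum_const, Finset.card_univ, Fintype.card_pi, Fintype.card_fin,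
          Finset.prod_const, nsmul_eq_mul, Nat.cast_pow]
        field_simp

theorem sq_mul_minQuantE_pow_three_mul_le {k m : ℕ} (hk : 1 ≤ k) (hm : 1 ≤ m) :
    (k : ℝ) ^ 2 * minQuantE (k ^ 3 * m) ≤ minQuantE m := by
  classical
  obtain ⟨Y, hYQ, hYm⟩ := Qcube_infinite.exists_subset_card_eq m
  refine le_csInf ⟨_, Y, hYQ, hYm, rfl⟩ fun _ ⟨Z, hZQ, hZm, he⟩ => he ▸ ?_
  have hZ : Z.Nonempty := Finset.card_pos.1 (by omega)
  set W := Finset.univ.biUnion fun v => Z.image (subcubeMap k v)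
  have hWQ : ↑W ⊆ Qcube := by
    intro x hx
    simp only [W, Finset.coe_biUnion, Finset.coe_image, mem_iUnion] at hx
    obtain ⟨v, -, z, hz, rfl⟩ := hx
    exact subcubeMap_mem_Qcube v (hZQ hz)
  have hWcard : W.card ≤ k ^ 3 * m := by
    calc W.card ≤ ∑ v : Fin 3 → Fin k, (Z.image (subcubeMap k v)).card :=
          Finset.card_biUnion_le
      _ ≤ ∑ _v : Fin 3 → Fin k, m := Finset.sum_le_sum fun v _ => hZm ▸ Finset.card_image_le
      _ = k ^ 3 * m := by simp
  have hW : W.Nonempty := by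
    obtain ⟨z, hz⟩ := hZ
    exact ⟨_, Finset.mem_biUnion.2
      ⟨fun _ => ⟨0, hk⟩, Finset.mem_univ _, Finset.mem_image_of_mem _ hz⟩⟩
  calc (k : ℝ) ^ 2 * minQuantE (k ^ 3 * m)
        ≤ (k : ℝ) ^ 2 * (((k : ℝ) ^ 2)⁻¹ * quantE Z) := by
        gcongr
        exact (minQuantE_le_quantE hW hWQ hWcard).trans (quantE_biUnion_image_subcubeMap_le hk hZ)
    _ = quantE Z := by field_simp

theorem stmt_8 :
    ∃ L : ℝ,
      Filter.Tendsto
        (fun m : ℕ =>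
          (m : ℝ) ^ ((2 : ℝ) / 3) *
            sInf {e : ℝ | ∃ Z : Finset E3, (↑Z : Set E3) ⊆ Qcube ∧ Z.card = m ∧ e = quantE Z})
        Filter.atTop (nhds L) := by
  have h := exists_tendsto_rpow_div_mul_of_pow_mul_le (d := 3) zero_le_two three_ne_zero
    minQuantE_nonneg minQuantE_antitoneOn fun k m hk hm => by
      simpa only [Real.rpow_two] using sq_mul_minQuantE_pow_three_mul_le hk hm
  rw [Nat.cast_ofNat] at h
  exact h
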